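/- arXiv:1511.06022 — 2 statements merged into one kernel-verified Lean document; each statement's English description precedes it below -/
import Mathlib

section
/- Let Σ be a finite alphabet with weight function w : Σ → ℕ. Define the unweighting map that replaces every symbol ℓ in a sequence by w(ℓ) consecutive copies of ℓ. Then for any two sequences P₁, P₂ over Σ, the maximum total weight of a common subsequence of P₁ and P₂ equals the length of the longest common subsequence of the unweighted expansions of P₁ and P₂. -/
/-!
Expanding a common subsequence of `P₁, P₂` gives a common subsequence of the expansions whose
length is its weight. Conversely, let `X` be a common subsequence of the expansions, matched
against the block `a^(w a)` of the head `a` of `P₁`. If `X` does not start with `a`, nothing of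
`X` lies in that block and we recurse on the tail of `P₁`. If it does, the first `a` of `X` falls
in the block of some occurrence of `a` in `P₂`; keeping `a` in the weighted subsequence pays for
the first `w a` symbols of `X`, and the rest of `X` lies in the expansions of both tails.
-/

namespace List

variable {α : Type*}

theorem drop_length_sublist_of_sublist_append {X L₁ L₂ : List α} (h : X <+ L₁ ++ L₂) :
    X.drop L₁.length <+ L₂ := by
  obtain ⟨X₁, X₂, rfl, h₁, h₂⟩ := sublist_append_iff.mp h
  rw [drop_append, drop_eq_nil_of_le h₁.length_le, nil_append]
  exact (drop_sublist _ _).trans h₂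

theorem cons_sublist_of_cons_sublist_append_of_notMem {a : α} {X L₁ L₂ : List α}
    (h : a :: X <+ L₁ ++ L₂) (ha : a ∉ L₁) : a :: X <+ L₂ := by
  obtain ⟨X₁, X₂, hX, h₁, h₂⟩ := sublist_append_iff.mp h
  cases X₁ with
  | nil => rw [nil_append] at hX; exact hX ▸ h₂
  | cons b X₁ =>
    obtain ⟨rfl, -⟩ := cons_eq_cons.mp (hX.trans (cons_append ..))
    exact absurd (h₁.subset mem_cons_self) ha

def expand (w : α → ℕ) (l : List α) : List α :=
  l.flatMap fun a => replicate (w a) a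

variable (w : α → ℕ)

@[simp]
theorem expand_nil : expand w [] = [] := rfl

@[simp]
theorem expand_cons (a : α) (l : List α) : expand w (a :: l) = replicate (w a) a ++ expand w l :=
  flatMap_cons

theorem length_expand (l : List α) : (expand w l).length = (l.map w).sum := by
  simp [expand, length_flatMap]

theorem Sublist.expand {l₁ l₂ : List α} (h : l₁ <+ l₂) : expand w l₁ <+ expand w l₂ :=
  h.flatMap _

variable {w}

theorem exists_eq_append_cons_of_cons_sublist_expand {a : α} {X : List α} :
    ∀ {P : List α}, a :: X <+ expand w P →
      ∃ Q R, P = Q ++ a :: R ∧ a :: X <+ expand w (a :: R)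
  | [], h => by simp at h
  | b :: P, h => by
    by_cases hab : a = b
    · subst hab
      exact ⟨[], P, rfl, h⟩
    · rw [expand_cons] at h
      have hnot : a ∉ replicate (w b) b := fun ha => hab (eq_of_mem_replicate ha)
      obtain ⟨Q, R, rfl, hR⟩ := exists_eq_append_cons_of_cons_sublist_expand
        (cons_sublist_of_cons_sublist_append_of_notMem h hnot)
      exact ⟨b :: Q, R, rfl, hR⟩

theorem exists_sublist_sublist_length_le_sum_of_sublist_expand :
    ∀ {P₁ P₂ X : List α}, X <+ expand w P₁ → X <+ expand w P₂ →
      ∃ Y : List α, Y <+ P₁ ∧ Y <+ P₂ ∧ X.length ≤ (Y.map w).sum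
  | _, _, [], _, _ => ⟨[], nil_sublist _, nil_sublist _, le_rfl⟩
  | [], _, _ :: _, h₁, _ => by simp at h₁
  | a :: P₁, P₂, b :: X, h₁, h₂ => by
    rw [expand_cons] at h₁
    by_cases hba : b = a
    · subst hba
      obtain ⟨Q, R, rfl, hR⟩ := exists_eq_append_cons_of_cons_sublist_expand h₂
      rw [expand_cons] at hR
      have hP₁ := drop_length_sublist_of_sublist_append h₁
      have hR' := drop_length_sublist_of_sublist_append hR
      rw [length_replicate] at hP₁ hR'
      obtain ⟨Y, hY₁, hY₂, hY⟩ :=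
        exists_sublist_sublist_length_le_sum_of_sublist_expand hP₁ hR'
      refine ⟨b :: Y, hY₁.cons_cons b, (hY₂.cons_cons b).trans (sublist_append_right Q _), ?_⟩
      rw [length_drop] at hY
      simp only [length_cons, map_cons, sum_cons] at hY ⊢
      omega
    · have hnot : b ∉ replicate (w a) a := fun hb => hba (eq_of_mem_replicate hb)
      obtain ⟨Y, hY₁, hY₂, hY⟩ := exists_sublist_sublist_length_le_sum_of_sublist_expand
        (cons_sublist_of_cons_sublist_append_of_notMem h₁ hnot) h₂
      exact ⟨Y, hY₁.cons a, hY₂, hY⟩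

end List

theorem stmt3_general {σ : Type} (w : σ → ℕ) (P₁ P₂ : List σ) :
    sSup {v | ∃ X : List σ, X.Sublist P₁ ∧ X.Sublist P₂ ∧ (X.map w).sum = v} =
      sSup {v | ∃ X : List σ,
        X.Sublist (P₁.flatMap fun a => List.replicate (w a) a) ∧
        X.Sublist (P₂.flatMap fun a => List.replicate (w a) a) ∧ X.length = v} := by
  refine csSup_eq_csSup_of_forall_exists_le ?_ ?_
  · rintro _ ⟨X, h₁, h₂, rfl⟩
    exact ⟨_, ⟨X.expand w, h₁.expand w, h₂.expand w, rfl⟩, (List.length_expand w X).ge⟩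
  · rintro _ ⟨X, h₁, h₂, rfl⟩
    obtain ⟨Y, hY₁, hY₂, hY⟩ := List.exists_sublist_sublist_length_le_sum_of_sublist_expand h₁ h₂
    exact ⟨_, ⟨Y, hY₁, hY₂, rfl⟩, hY⟩

/-- Weighted LCS equals LCS of the unweighted expansions: the maximum total weight of a
common subsequence of `P₁`, `P₂` equals the maximum length of a common subsequence of the
sequences obtained by replacing each symbol `ℓ` with `w ℓ` consecutive copies of `ℓ`. -/
theorem stmt3 {σ : Type} [DecidableEq σ] (w : σ → ℕ) (P₁ P₂ : List σ) :
    sSup {v | ∃ X : List σ, X.Sublist P₁ ∧ X.Sublist P₂ ∧ (X.map w).sum = v} =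
      sSup {v | ∃ X : List σ,
        X.Sublist (P₁.flatMap fun a => List.replicate (w a) a) ∧
        X.Sublist (P₂.flatMap fun a => List.replicate (w a) a) ∧ X.length = v} :=
  stmt3_general w P₁ P₂
end

section
/- Suppose δ(G(a_i), H(b_j)) ∈ {Y, Y+ρ} for all i,j ∈ [N] with ρ > 0, and suppose δ(x,y) is determined as min over shifts Δ ∈ {0,…,N} of Σ_{j=1}^{N} δ(G(a_{(Δ+j−1 mod N)+1}), H(b_j)) (structured alignments on a doubled list). Then δ(x,y) ≤ N(Y+ρ) − ρ if and only if there exist i, j with δ(G(a_i),H(b_j)) = Y; otherwise δ(x,y) = N(Y+ρ). -/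
/-!
Every shift costs at most `N (Y + ρ)`. If some pair `(i, j)` is at distance `Y`, the shift
`Δ = i - j (mod N)` aligns `b_j` with `a_i`, which saves `ρ` on that term; if no pair
is at distance `Y`, every term of every shift costs exactly `Y + ρ`.
-/

open Finset

theorem Finset.sum_add_le_card_nsmul_add {ι M : Type*} [Fintype ι]
    [AddCommMonoid M] [PartialOrder M] [IsOrderedAddMonoid M]
    (f : ι → M) (c : M) (hf : ∀ i, f i ≤ c) (i₀ : ι) :
    ∑ i, f i + c ≤ Fintype.card ι • c + f i₀ := by
  classical
  have hrest : ∑ i ∈ univ.erase i₀, f i ≤ ∑ i ∈ univ.erase i₀, c :=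
    sum_le_sum fun i _ => hf i
  calc ∑ i, f i + c = f i₀ + (∑ i ∈ univ.erase i₀, f i + c) := by
        rw [← add_sum_erase _ _ (mem_univ i₀), add_assoc]
    _ ≤ f i₀ + (∑ i ∈ univ.erase i₀, c + c) := by gcongr
    _ = Fintype.card ι • c + f i₀ := by
        rw [sum_erase_add univ (fun _ => c) (mem_univ i₀), sum_const, card_univ, add_comm]

/-- Cost of the structured alignment with shift `Δ` of `y` against the doubled list. -/
def shiftCost {M : Type*} [AddCommMonoid M] {N : ℕ} [NeZero N] (d : Fin N → Fin N → M)
    (Δ : ℕ) : M :=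
  ∑ j : Fin N, d ⟨(Δ + j.1) % N, Nat.mod_lt _ N.pos_of_neZero⟩ j

section shiftCost

variable {M : Type*} [AddCommMonoid M] {N : ℕ} [NeZero N] (d : Fin N → Fin N → M)

theorem shiftCost_of_forall_eq {c : M} (hc : ∀ i j, d i j = c) (Δ : ℕ) :
    shiftCost d Δ = N • c := by
  simp [shiftCost, hc]

theorem shiftCost_sub_add_le [PartialOrder M] [IsOrderedAddMonoid M] {c : M}
    (hc : ∀ i j, d i j ≤ c) (i j : Fin N) :
    shiftCost d (i - j : Fin N) + c ≤ N • c + d i j := by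
  have hshift (j' : Fin N) :
      (⟨((i - j : Fin N) + j'.1) % N, Nat.mod_lt _ N.pos_of_neZero⟩ : Fin N) = i - j + j' :=
    Fin.ext (Fin.val_add _ _).symm
  have := sum_add_le_card_nsmul_add (fun j' => d (i - j + j') j') c (fun j' => hc _ _) j
  simpa [shiftCost, hshift] using this

end shiftCost

/-- If all pairwise gadget distances lie in `{Y, Y+ρ}` with `ρ > 0`, and `D` is the minimum
over cyclic shifts `Δ ∈ {0,…,N}` of the structured-alignment cost on the doubled list,
then `D ≤ N(Y+ρ) − ρ` iff some pair has distance `Y`, and otherwise `D = N(Y+ρ)`. -/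
theorem stmt11 (N Y ρ : ℕ) (hρ : 0 < ρ) (hN : 0 < N) (d : Fin N → Fin N → ℕ)
    (h : ∀ i j, d i j = Y ∨ d i j = Y + ρ) (D : ℕ)
    (hD : D = (Finset.range (N + 1)).inf' ⟨0, Finset.mem_range.mpr (Nat.succ_pos N)⟩
      (fun Δ => ∑ j : Fin N, d ⟨(Δ + j.1) % N, Nat.mod_lt _ hN⟩ j)) :
    (D ≤ N * (Y + ρ) - ρ ↔ ∃ i j, d i j = Y) ∧
    ((¬ ∃ i j, d i j = Y) → D = N * (Y + ρ)) := by
  have := NeZero.of_pos hN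
  by_cases hY : ∃ i j, d i j = Y
  · refine ⟨iff_of_true ?_ hY, fun hno => (hno hY).elim⟩
    obtain ⟨i, j, hij⟩ := hY
    have hmem : ((i - j : Fin N) : ℕ) ∈ range (N + 1) := mem_range.mpr (by omega)
    have hmin : D ≤ shiftCost d (i - j : Fin N) := hD ▸ inf'_le _ hmem
    have hsave := shiftCost_sub_add_le d (c := Y + ρ)
      (fun i j => (h i j).elim (fun hy => by omega) le_of_eq) i j
    rw [hij, smul_eq_mul] at hsave
    omega
  · have hall : ∀ i j, d i j = Y + ρ := fun i j =>
      (h i j).resolve_left fun hy => hY ⟨i, j, hy⟩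
    have hcost (Δ : ℕ) : shiftCost d Δ = N * (Y + ρ) := shiftCost_of_forall_eq d hall Δ
    have hDeq : D = N * (Y + ρ) := by
      rw [hD]
      exact (congrArg (inf' _ _) (funext hcost)).trans (inf'_const _ _)
    refine ⟨iff_of_false ?_ hY, fun _ => hDeq⟩
    rw [hDeq, not_le]
    exact Nat.sub_lt (Nat.mul_pos hN (by omega)) hρ
end
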